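/- arXiv:1101.2705 — 2 statements merged into one kernel-verified Lean document; each statement's English description precedes it below -/
import Mathlib

section
/- Let B be a deterministic thrifty branching program solving DE^G_k for a rooted dag G. Then for every input I and every non-leaf node u of G, there is at least one state on the computation path of I that queries the thrifty u-variable of I (i.e., queries f_u(val(v_1)[I],...,val(v_d)[I]) where v_1,...,v_d are u's children); moreover, for every such state q and each child v of u, some state strictly earlier on the computation path of I queries a v-variable of I. -/
/-- A deterministic `k`-way branching program with variables `Var` and outputs `Out`.
States are either query states (labeled by `query`, with `k` out-edges given by `next`)
or output states (where `out` is `some o`). -/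
structure BP (Var : Type) (k : ℕ) (Out : Type) where
  State : Type
  [finState : Fintype State]
  start : State
  query : State → Var
  next : State → Fin k → State
  out : State → Option Out

namespace BP

variable {Var Out : Type} {k : ℕ}

/-- The number of states. -/
noncomputable def size (B : BP Var k Out) : ℕ := @Fintype.card B.State B.finState

/-- The computation path of input `I`. -/
def path (B : BP Var k Out) (I : Var → Fin k) : ℕ → B.State
  | 0 => B.start
  | t + 1 => B.next (B.path I t) (I (B.query (B.path I t)))

/-- The computation of `I` is still running at time `t`: no output state was reached earlier. -/
def VisitsAt (B : BP Var k Out) (I : Var → Fin k) (t : ℕ) : Prop :=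
  ∀ s < t, B.out (B.path I s) = none

/-- State `q` is on the computation path of input `I`. -/
def Visits (B : BP Var k Out) (I : Var → Fin k) (q : B.State) : Prop :=
  ∃ t, B.VisitsAt I t ∧ B.path I t = q

/-- `B` computes the function `g`. -/
def Computes (B : BP Var k Out) (g : (Var → Fin k) → Out) : Prop :=
  ∀ I, ∃ t, B.VisitsAt I t ∧ B.out (B.path I t) = some (g I)

end BP
/-- A connected rooted dag: nodes `Fin n`, with `child v u` meaning there is an arc from `v`
to `u` (so `v` is a child of `u`).  The relation is well-founded (the dag is acyclic), the
root is the unique node of out-degree `0` (every other node has a parent, which also makes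
the dag connected). -/
structure RootedDag where
  n : ℕ
  child : Fin n → Fin n → Prop
  wf : WellFounded child
  root : Fin n
  root_no_parent : ∀ u, ¬ child root u
  root_unique : ∀ u, u ≠ root → ∃ w, child u w

namespace RootedDag

/-- A leaf is a node of in-degree `0`. -/
def IsLeaf (G : RootedDag) (u : Fin G.n) : Prop := ∀ v, ¬ G.child v u

/-- The input variables of the dag evaluation problem `DE^G_k`: a leaf variable `l_u` for each
leaf `u`, and a variable `f_u(a⃗)` for each internal node `u` and each assignment `a⃗` of values
in `[k]` to the children of `u`. -/
def Var (G : RootedDag) (k : ℕ) : Type :=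
  {u : Fin G.n // G.IsLeaf u} ⊕
    (Σ _u : {u : Fin G.n // ¬ G.IsLeaf u}, ({v : Fin G.n // G.child v _u.1} → Fin k))

/-- The value of each node of `G` under input `I`: leaves take their `l` value, and an internal
node applies its function to the values of its children. -/
noncomputable def val (G : RootedDag) {k : ℕ} (I : G.Var k → Fin k) : Fin G.n → Fin k :=
  WellFounded.fix (C := fun _ => Fin k) G.wf fun u ih =>
    letI := Classical.dec (G.IsLeaf u)
    if h : G.IsLeaf u then I (Sum.inl ⟨u, h⟩)
    else I (Sum.inr ⟨⟨u, h⟩, fun v => ih v.1 v.2⟩)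

/-- `B` solves `DE^G_k`: on every input it halts with output `true` iff the value of the
root is `1` (the first element of `[k]`). -/
def SolvesDE (G : RootedDag) {k : ℕ} (hk : 0 < k) (B : BP (G.Var k) k Bool) : Prop :=
  B.Computes fun I => decide (G.val I G.root = ⟨0, hk⟩)

/-- `B` is thrifty: whenever a state querying `f_u(a⃗)` is visited by input `I`, then `a⃗` is
exactly the tuple of values of the children of `u` under `I`. -/
def Thrifty (G : RootedDag) {k : ℕ} (B : BP (G.Var k) k Bool) : Prop :=
  ∀ (I : G.Var k → Fin k) (q : B.State) (u : {u : Fin G.n // ¬ G.IsLeaf u})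
    (a : {v : Fin G.n // G.child v u.1} → Fin k),
    B.Visits I q → B.query q = Sum.inr ⟨u, a⟩ → ∀ v, a v = G.val I v.1

end RootedDag

/-- State `q` queries the `u`-variable of input `I`: the leaf variable `l_u` if `u` is a leaf,
or the thrifty variable `f_u(val(v₁)[I], …)` if `u` is internal. -/
def QueriesNode (G : RootedDag) {k : ℕ} (B : BP (G.Var k) k Bool)
    (I : G.Var k → Fin k) (q : B.State) (u : Fin G.n) : Prop :=
  (∃ h : G.IsLeaf u, B.query q = Sum.inl ⟨u, h⟩) ∨
  (∃ h : ¬ G.IsLeaf u, B.query q = Sum.inr ⟨⟨u, h⟩, fun v => G.val I v.1⟩)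

/-!
Both parts are adversary arguments. If no state on the path of `I` queries the `u`-variable,
let `I'` agree with `I` on the thrifty variables of the nodes other than `u` and answer
`flipZero (val I x)` on every other variable of a node `x`. Then `B` runs on `I'` exactly as on
`I`, but the new value of `u` makes every ancestor of `u` read a non-thrifty variable, so the
root's value crosses between `0` and non-`0` and the two answers differ. If the thrifty
`u`-variable is queried at time `t` before any `v`-variable of a child `v`, change only the
`v`-variable: the path up to `t` is the same, the value of `v` changes, and the query at time
`t` is no longer thrifty for the new input.
-/

namespace BP

variable {Var Out : Type} {k : ℕ} {B : BP Var k Out} {I I' : Var → Fin k} {s t : ℕ}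

theorem VisitsAt.mono (ht : B.VisitsAt I t) (hst : s ≤ t) : B.VisitsAt I s :=
  fun r hr => ht r (hr.trans_le hst)

theorem path_congr (h : ∀ s < t, I' (B.query (B.path I s)) = I (B.query (B.path I s))) :
    B.path I' t = B.path I t := by
  induction t with
  | zero => rfl
  | succ t ih =>
    have hpath : B.path I' t = B.path I t := ih fun s hs => h s (hs.trans t.lt_succ_self)
    simp only [path, hpath, h t t.lt_succ_self]

theorem visitsAt_congr (h : ∀ s < t, I' (B.query (B.path I s)) = I (B.query (B.path I s))) :
    B.VisitsAt I' t ↔ B.VisitsAt I t := by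
  have hpath : ∀ s < t, B.path I' s = B.path I s :=
    fun s hs => path_congr fun r hr => h r (hr.trans hs)
  exact forall₂_congr fun s hs => by rw [hpath s hs]

theorem Visits.of_agree (ht : B.VisitsAt I t)
    (h : ∀ s < t, I' (B.query (B.path I s)) = I (B.query (B.path I s))) :
    B.Visits I' (B.path I t) :=
  ⟨t, (visitsAt_congr h).2 ht, path_congr h⟩

theorem Computes.eq_of_out {g : (Var → Fin k) → Out} (hB : B.Computes g) {b : Out}
    (ht : B.VisitsAt I t) (hout : B.out (B.path I t) = some b) : g I = b := by
  obtain ⟨t', ht', hout'⟩ := hB I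
  rcases lt_trichotomy t t' with hlt | rfl | hlt
  · simpa [hout] using ht' t hlt
  · simpa [hout] using hout'.symm
  · simpa [hout'] using ht t' hlt

theorem Computes.eq_of_agree {g : (Var → Fin k) → Out} (hB : B.Computes g)
    (h : ∀ t, B.VisitsAt I t → I' (B.query (B.path I t)) = I (B.query (B.path I t))) :
    g I' = g I := by
  obtain ⟨t, ht, hout⟩ := hB I
  have hagree : ∀ s < t, I' (B.query (B.path I s)) = I (B.query (B.path I s)) :=
    fun s hs => h s (ht.mono hs.le)
  exact hB.eq_of_out ((visitsAt_congr hagree).2 ht) (by rwa [path_congr hagree])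

end BP

namespace RootedDag

variable (G : RootedDag) {k : ℕ}

theorem not_transGen_self (x : Fin G.n) : ¬ Relation.TransGen G.child x x :=
  G.wf.transGen.irrefl.irrefl x

theorem reflTransGen_root (w : Fin G.n) : Relation.ReflTransGen G.child w G.root := by
  have : IsTrans (Fin G.n) (flip (Relation.TransGen G.child)) := ⟨fun _ _ _ h h' => h'.trans h⟩
  have : Std.Irrefl (flip (Relation.TransGen G.child)) := ⟨G.not_transGen_self⟩
  have hwf := Finite.wellFounded_of_trans_of_irrefl (flip (Relation.TransGen G.child))
  induction w using hwf.induction with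
  | _ w ih =>
    by_cases hw : w = G.root
    · exact hw ▸ .refl
    · obtain ⟨p, hp⟩ := G.root_unique w hw
      exact .head hp (ih p (.single hp))

/-- The paper's `x`-variable, for the node values `σ` in place of `val(·)[I]`. -/
noncomputable def nodeVar (σ : Fin G.n → Fin k) (x : Fin G.n) : G.Var k :=
  letI := Classical.dec (G.IsLeaf x)
  if h : G.IsLeaf x then Sum.inl ⟨x, h⟩ else Sum.inr ⟨⟨x, h⟩, fun v => σ v.1⟩

def Var.node {G : RootedDag} : G.Var k → Fin G.n :=
  Sum.elim (fun l => l.1) (fun p => p.1.1)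

variable {G}

theorem nodeVar_of_isLeaf (σ : Fin G.n → Fin k) {x : Fin G.n} (hx : G.IsLeaf x) :
    G.nodeVar σ x = Sum.inl ⟨x, hx⟩ :=
  dif_pos hx

theorem nodeVar_of_not_isLeaf (σ : Fin G.n → Fin k) {x : Fin G.n} (hx : ¬ G.IsLeaf x) :
    G.nodeVar σ x = Sum.inr ⟨⟨x, hx⟩, fun v => σ v.1⟩ :=
  dif_neg hx

@[simp]
theorem node_nodeVar (σ : Fin G.n → Fin k) (x : Fin G.n) : (G.nodeVar σ x).node = x := by
  by_cases hx : G.IsLeaf x <;> simp [nodeVar, hx, Var.node]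

theorem nodeVar_eq_nodeVar_iff {σ τ : Fin G.n → Fin k} {x : Fin G.n} :
    G.nodeVar σ x = G.nodeVar τ x ↔ ∀ v, G.child v x → σ v = τ v := by
  by_cases hx : G.IsLeaf x
  · rw [nodeVar_of_isLeaf σ hx, nodeVar_of_isLeaf τ hx]
    exact iff_of_true rfl fun v hv => absurd hv (hx v)
  · rw [nodeVar_of_not_isLeaf σ hx, nodeVar_of_not_isLeaf τ hx]
    refine ⟨fun h v hv => ?_, fun h => ?_⟩
    · exact congrFun (eq_of_heq (Sigma.mk.inj (Sum.inr.inj h)).2) ⟨v, hv⟩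
    · rw [show (fun v : {v // G.child v x} => σ v.1) = fun v => τ v.1 from
        funext fun v => h v.1 v.2]

theorem val_eq (I : G.Var k → Fin k) (x : Fin G.n) : G.val I x = I (G.nodeVar (G.val I) x) := by
  rw [val, WellFounded.fix_eq]
  by_cases hx : G.IsLeaf x <;> simp [nodeVar, hx]

theorem val_congr {I I' : G.Var k → Fin k} {w : Fin G.n}
    (h : ∀ x, Relation.ReflTransGen G.child x w →
      I' (G.nodeVar (G.val I) x) = I (G.nodeVar (G.val I) x)) :
    G.val I' w = G.val I w := by
  induction w using G.wf.induction with
  | _ w ih =>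
    have hchildren : G.nodeVar (G.val I') w = G.nodeVar (G.val I) w :=
      nodeVar_eq_nodeVar_iff.2 fun v hv =>
        ih v hv fun x hx => h x (hx.tail hv)
    rw [val_eq, hchildren, h w .refl, ← val_eq I w]

theorem val_update_nodeVar [DecidableEq (G.Var k)] (I : G.Var k → Fin k) (v : Fin G.n)
    (c : Fin k) : G.val (Function.update I (G.nodeVar (G.val I) v) c) v = c := by
  have hchildren : G.nodeVar (G.val (Function.update I (G.nodeVar (G.val I) v) c)) v =
      G.nodeVar (G.val I) v := by
    refine nodeVar_eq_nodeVar_iff.2 fun w hw => val_congr fun x hx => ?_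
    refine Function.update_of_ne (fun heq => G.not_transGen_self v ?_) _ _
    have hxv : x = v := by simpa using congrArg Var.node heq
    subst hxv
    exact .tail' hx hw
  rw [val_eq, hchildren, Function.update_self]

theorem Thrifty.query_eq_nodeVar {B : BP (G.Var k) k Bool} (hB : G.Thrifty B)
    {I : G.Var k → Fin k} {q : B.State} (hq : B.Visits I q) :
    B.query q = G.nodeVar (G.val I) (B.query q).node := by
  rcases h : B.query q with ⟨x, hx⟩ | ⟨x, a⟩
  · exact (nodeVar_of_isLeaf _ hx).symm
  · obtain rfl : a = fun v => G.val I v.1 := funext (hB I q x a hq h)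
    exact (nodeVar_of_not_isLeaf _ x.2).symm

theorem queriesNode_iff {B : BP (G.Var k) k Bool} {I : G.Var k → Fin k} {q : B.State}
    {u : Fin G.n} : QueriesNode G B I q u ↔ B.query q = G.nodeVar (G.val I) u := by
  by_cases hu : G.IsLeaf u
  · simp [QueriesNode, nodeVar_of_isLeaf _ hu, hu]
  · simp [QueriesNode, nodeVar_of_not_isLeaf _ hu, hu]

def flipZero (hk : 2 ≤ k) (a : Fin k) : Fin k :=
  if a = ⟨0, Nat.zero_lt_of_lt hk⟩ then ⟨1, hk⟩ else ⟨0, Nat.zero_lt_of_lt hk⟩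

theorem flipZero_eq_zero_iff (hk : 2 ≤ k) (hk₀ : 0 < k) (a : Fin k) :
    flipZero hk a = ⟨0, hk₀⟩ ↔ a ≠ ⟨0, hk₀⟩ := by
  unfold flipZero
  split <;> simp_all [Fin.ext_iff]

theorem flipZero_ne (hk : 2 ≤ k) (a : Fin k) : flipZero hk a ≠ a := by
  unfold flipZero
  split <;> simp_all [Fin.ext_iff, eq_comm]

open Classical in
noncomputable def flipInput (hk : 2 ≤ k) (I : G.Var k → Fin k) (u : Fin G.n) :
    G.Var k → Fin k := fun w =>
  if w = G.nodeVar (G.val I) w.node ∧ w.node ≠ u then I w else flipZero hk (G.val I w.node)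

theorem flipInput_nodeVar (hk : 2 ≤ k) {I : G.Var k → Fin k} {u x : Fin G.n} (hx : x ≠ u) :
    flipInput hk I u (G.nodeVar (G.val I) x) = I (G.nodeVar (G.val I) x) :=
  if_pos ⟨by rw [node_nodeVar], by rwa [node_nodeVar]⟩

/-- The flip at `u` propagates: each ancestor of `u` sees a changed child, so the variable it
reads is not thrifty for `I`. -/
theorem val_flipInput (hk : 2 ≤ k) (I : G.Var k → Fin k) {u w : Fin G.n}
    (h : Relation.ReflTransGen G.child u w) :
    G.val (flipInput hk I u) w = flipZero hk (G.val I w) := by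
  induction h with
  | refl =>
    rw [val_eq, flipInput, if_neg, node_nodeVar]
    exact fun h => h.2 (node_nodeVar _ _)
  | tail _ hchild ih =>
    rw [val_eq, flipInput, if_neg, node_nodeVar]
    rintro ⟨h, -⟩
    rw [node_nodeVar] at h
    exact flipZero_ne hk _ (ih.symm.trans (nodeVar_eq_nodeVar_iff.1 h _ hchild))

theorem Thrifty.exists_visitsAt_queriesNode {B : BP (G.Var k) k Bool} (hthrifty : G.Thrifty B)
    (hk : 2 ≤ k) (hsolve : G.SolvesDE (Nat.zero_lt_of_lt hk) B) (I : G.Var k → Fin k)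
    (u : Fin G.n) :
    ∃ t, B.VisitsAt I t ∧ QueriesNode G B I (B.path I t) u := by
  by_contra! hnone
  have hagree : ∀ t, B.VisitsAt I t →
      flipInput hk I u (B.query (B.path I t)) = I (B.query (B.path I t)) := by
    intro t ht
    rw [hthrifty.query_eq_nodeVar ⟨t, ht, rfl⟩]
    refine flipInput_nodeVar hk fun hnode => hnone t ht ?_
    rw [queriesNode_iff, hthrifty.query_eq_nodeVar ⟨t, ht, rfl⟩, hnode]
  have hanswer := hsolve.eq_of_agree hagree
  simp [val_flipInput hk I (G.reflTransGen_root u), flipZero_eq_zero_iff] at hanswer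

theorem Thrifty.exists_lt_queriesNode_of_child {B : BP (G.Var k) k Bool}
    (hthrifty : G.Thrifty B) (hk : 2 ≤ k) {I : G.Var k → Fin k} {t : ℕ} {u v : Fin G.n}
    (ht : B.VisitsAt I t) (hq : QueriesNode G B I (B.path I t) u) (hv : G.child v u) :
    ∃ s < t, QueriesNode G B I (B.path I s) v := by
  classical
  by_contra! hnone
  set I' := Function.update I (G.nodeVar (G.val I) v) (flipZero hk (G.val I v))
  have hagree : ∀ s < t, I' (B.query (B.path I s)) = I (B.query (B.path I s)) :=
    fun s hs => Function.update_of_ne (fun h => hnone s hs (queriesNode_iff.2 h)) _ _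
  have hu : ¬ G.IsLeaf u := fun h => h v hv
  have hquery := (queriesNode_iff.1 hq).trans (nodeVar_of_not_isLeaf _ hu)
  have hval := hthrifty I' _ ⟨u, hu⟩ _ (BP.Visits.of_agree ht hagree) hquery ⟨v, hv⟩
  rw [val_update_nodeVar] at hval
  exact flipZero_ne hk _ hval.symm

end RootedDag

/-- For a deterministic thrifty BP solving `DE^G_k`: every input `I` and non-leaf node `u`,
some state on `I`'s computation path queries the thrifty `u`-variable of `I`, and for every
such state, each child `v` of `u` has its `v`-variable queried strictly earlier on the path. -/
theorem stmt2 (G : RootedDag) (k : ℕ) (hk : 2 ≤ k)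
    (B : BP (G.Var k) k Bool)
    (hsolve : G.SolvesDE (by omega) B) (hthrifty : G.Thrifty B)
    (I : G.Var k → Fin k) (u : Fin G.n) (hu : ¬ G.IsLeaf u) :
    (∃ t, B.VisitsAt I t ∧
        B.query (B.path I t) = Sum.inr ⟨⟨u, hu⟩, fun v => G.val I v.1⟩) ∧
    (∀ t, B.VisitsAt I t →
        B.query (B.path I t) = Sum.inr ⟨⟨u, hu⟩, fun v => G.val I v.1⟩ →
        ∀ v : Fin G.n, G.child v u →
          ∃ s < t, QueriesNode G B I (B.path I s) v) := by
  refine ⟨?_, fun t ht hq v hv =>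
    hthrifty.exists_lt_queriesNode_of_child hk ht (.inr ⟨hu, hq⟩) hv⟩
  obtain ⟨t, ht, ⟨hleaf, -⟩ | ⟨_, hquery⟩⟩ :=
    hthrifty.exists_visitsAt_queriesNode hk hsolve I u
  · exact absurd hleaf hu
  · exact ⟨t, ht, hquery⟩
end

section
/- In the reduction above, for every input I of DE^G_k, every node u of G, and every a ∈ [k], the element g(u,a) is in the closure of {1} under T^I if and only if val(u)[I] = a. Similarly, for every arc vu, g(vu,a) is generated by T^I iff val(v)[I] = a. -/
/-- A rooted dag in which every internal node has an ordered pair of children (left, right).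
`children u = none` means `u` is a leaf; the root is the unique node that is nobody's child. -/
structure BinDag where
  n : ℕ
  children : Fin n → Option (Fin n × Fin n)
  wf : WellFounded fun v u : Fin n => ∃ c, children u = some c ∧ (v = c.1 ∨ v = c.2)
  root : Fin n
  root_no_parent : ∀ u c, children u = some c → c.1 ≠ root ∧ c.2 ≠ root
  root_unique : ∀ u, u ≠ root → ∃ p c, children p = some c ∧ (u = c.1 ∨ u = c.2)

namespace BinDag

/-- The child relation: `v` is a child of `u`. -/
def childRel (G : BinDag) : Fin G.n → Fin G.n → Prop :=
  fun v u => ∃ c, G.children u = some c ∧ (v = c.1 ∨ v = c.2)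

/-- The `DE^G_k` variables for a binary dag: a leaf variable `l_u` for each leaf `u`, and a
variable `f_u(b₁, b₂)` for each internal node `u` and `b₁, b₂ ∈ [k]`. -/
def Var (G : BinDag) (k : ℕ) : Type :=
  {u : Fin G.n // G.children u = none} ⊕
    (Σ _u : {u : Fin G.n // (G.children u).isSome}, Fin k × Fin k)

/-- The value of each node under input `I`: leaves take their `l` value, and an internal node
applies its function to the values of its two children. -/
noncomputable def val (G : BinDag) {k : ℕ} (I : G.Var k → Fin k) : Fin G.n → Fin k :=
  WellFounded.fix (C := fun _ => Fin k) G.wf fun u ih =>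
    match h : G.children u with
    | none => I (Sum.inl ⟨u, h⟩)
    | some c => I (Sum.inr ⟨⟨u, by rw [h]; rfl⟩,
        (ih c.1 ⟨c, h, Or.inl rfl⟩, ih c.2 ⟨c, h, Or.inr rfl⟩)⟩)

/-- `B` solves `DE^G_k` for a binary dag `G`: on every input it halts and outputs `true` iff
the value of the root is `1` (the first element of `[k]`). -/
def SolvesDE (G : BinDag) {k : ℕ} (hk : 0 < k) (B : BP (G.Var k) k Bool) : Prop :=
  ∀ I : G.Var k → Fin k, ∃ t, B.VisitsAt I t ∧
    B.out (B.path I t) = some (decide (G.val I G.root = ⟨0, hk⟩))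

/-- `B` is thrifty: whenever a state querying `f_u(b₁, b₂)` is visited by input `I`, then
`(b₁, b₂)` is exactly the pair of values of the children of `u` under `I`. -/
def Thrifty (G : BinDag) {k : ℕ} (B : BP (G.Var k) k Bool) : Prop :=
  ∀ (I : G.Var k → Fin k) (q : B.State) (u : {u : Fin G.n // (G.children u).isSome})
    (b : Fin k × Fin k), B.Visits I q → B.query q = Sum.inr ⟨u, b⟩ →
    ∀ c, G.children u.1 = some c → b.1 = G.val I c.1 ∧ b.2 = G.val I c.2

end BinDag

/-- The closure of `{1}` under the binary operation `T` on `[m]` (element `j ∈ [m]` is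
represented by the index `j - 1 : Fin m`, so `1` is index `0`). -/
inductive Generated {m : ℕ} (T : Fin m → Fin m → Fin m) : Fin m → Prop
  | one (h : 0 < m) : Generated T ⟨0, h⟩
  | app {x y : Fin m} : Generated T x → Generated T y → Generated T (T x y)

/-- `B` solves `GEN(m)`: on every instance `T : [m]×[m] → [m]` it halts and outputs `true`
iff `m` (index `m - 1`) is in the closure of `{1}` under `T`. -/
def SolvesGEN {m : ℕ} (hm : 0 < m) (B : BP (Fin m × Fin m) m Bool) : Prop :=
  ∀ T : Fin m × Fin m → Fin m, ∃ t b, B.VisitsAt T t ∧ B.out (B.path T t) = some b ∧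
    (b = true ↔ Generated (fun x y => T (x, y)) ⟨m - 1, Nat.sub_lt hm one_pos⟩)

/-- `B` is semantic-incremental: for every state `q` querying variable `(x, y)` and every
input `T` whose computation path visits `q`, each of `x`, `y` is either `1` (index `0`) or
labels an earlier edge on `T`'s computation path (edge labels are the answers to the queries). -/
def SemIncr {m : ℕ} (B : BP (Fin m × Fin m) m Bool) : Prop :=
  ∀ (T : Fin m × Fin m → Fin m) (t : ℕ), B.VisitsAt T t → B.out (B.path T t) = none →
    ∀ z ∈ ({(B.query (B.path T t)).1, (B.query (B.path T t)).2} : Set (Fin m)),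
      (z : ℕ) = 0 ∨ ∃ s < t, T (B.query (B.path T s)) = z

/-- The static data of the reduction from `DE^G_k` to `GEN(m)`, `m = 3kn + n + 1`.
Element `j ∈ [m]` is represented by the index `j - 1 : Fin m` (so `1` is index `0`); node
`u : Fin n` (i.e., node `u+1 ∈ [n]`) is the element with index `u`.  The leaves are listed in
a fixed order `w 0, …, w (l-1)`.  The elements `{n+2, …, m}` (indices `≥ n+1`) are injectively
assigned names `gN u a` ("node `u` has value `a`") and `gA u s a` ("value `a` flows along the
left (`s = false`) or right (`s = true`) in-arc of `u`"), with `gN root 1 = m` (index `m-1`). -/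
structure RedSetup (G : BinDag) (k : ℕ) where
  hn : 2 ≤ G.n
  hk : 2 ≤ k
  hdisj : ∀ u c, G.children u = some c → c.1 ≠ c.2
  m : ℕ
  hm : m = 3 * k * G.n + G.n + 1
  l : ℕ
  w : Fin l → Fin G.n
  w_leaf : ∀ t, G.children (w t) = none
  w_inj : Function.Injective w
  w_surj : ∀ u, G.children u = none → ∃ t, w t = u
  gN : Fin G.n → Fin k → Fin m
  gA : Fin G.n → Bool → Fin k → Fin m
  g_inj : Function.Injective fun x : (Fin G.n × Fin k) ⊕ (Fin G.n × Bool × Fin k) =>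
    match x with
    | .inl (u, a) => gN u a
    | .inr (u, s, a) => gA u s a
  g_range_N : ∀ u a, G.n + 1 ≤ (gN u a : ℕ)
  g_range_A : ∀ u s a, G.n + 1 ≤ (gA u s a : ℕ)
  g_root : (gN G.root ⟨0, by omega⟩ : ℕ) = m - 1

namespace RedSetup

variable {G : BinDag} {k : ℕ}

theorem m_pos (R : RedSetup G k) : 0 < R.m := R.hm ▸ Nat.succ_pos _

theorem lt_m (R : RedSetup G k) {j : ℕ} (h : j ≤ G.n + 1) : j < R.m := by
  have h1 : 2 * 2 ≤ k * G.n := Nat.mul_le_mul R.hk R.hn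
  have h2 : R.m = 3 * (k * G.n) + G.n + 1 := by rw [R.hm, Nat.mul_assoc]
  omega

/-- The element with index `j` of `[m]`. -/
def el (R : RedSetup G k) (j : ℕ) (h : j < R.m) : Fin R.m := ⟨j, h⟩

/-- The pairs `(x, y)` that are "used", i.e., appear as the left-hand side of one of the
explicit defining equations of `T^I`. -/
def Used (R : RedSetup G k) (x y : Fin R.m) : Prop :=
  ((x : ℕ) = 0 ∧ (y : ℕ) < G.n) ∨
  ((x : ℕ) = 0 ∧ (y : ℕ) = G.n) ∨
  ((x : ℕ) = 0 ∧ ∃ (t : ℕ) (ht : t + 1 < R.l) (a : Fin k),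
      y = R.gN (R.w ⟨t, by omega⟩) a) ∨
  (∃ (u : Fin G.n) (c : Fin G.n × Fin G.n) (a : Fin k), G.children u = some c ∧
      (x : ℕ) = (u : ℕ) + 1 ∧ (y = R.gN c.1 a ∨ y = R.gN c.2 a)) ∨
  (∃ (u : Fin G.n) (c : Fin G.n × Fin G.n) (b₁ b₂ : Fin k), G.children u = some c ∧
      x = R.gA u false b₁ ∧ y = R.gA u true b₂)

/-- `T` is the `GEN(m)` instance `T^I` associated to the `DE^G_k` input `I` by the reduction:
`T(1, u) = u + 1` for `u ∈ [n]`; `T(1, n+1) = gN (w 1) (l_{w 1})`;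
`T(1, gN (w t) a) = gN (w (t+1)) (l_{w (t+1)})`; for internal `u` with children `(v₁, v₂)`:
`T(u + 1, gN vᵢ a) = gA u side a` and `T(gA u false b₁, gA u true b₂) = gN u (f_u(b₁, b₂))`;
all unused variables are set to `1`. -/
def Defines (R : RedSetup G k) (I : G.Var k → Fin k) (T : Fin R.m → Fin R.m → Fin R.m) :
    Prop :=
  (∀ u : Fin G.n, T (R.el 0 R.m_pos) (R.el u (R.lt_m (by omega)))
      = R.el ((u : ℕ) + 1) (R.lt_m (by omega))) ∧
  (∀ h0 : 0 < R.l, T (R.el 0 R.m_pos) (R.el G.n (R.lt_m (by omega)))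
      = R.gN (R.w ⟨0, h0⟩) (G.val I (R.w ⟨0, h0⟩))) ∧
  (∀ (t : ℕ) (ht : t + 1 < R.l) (a : Fin k),
      T (R.el 0 R.m_pos) (R.gN (R.w ⟨t, by omega⟩) a)
        = R.gN (R.w ⟨t + 1, ht⟩) (G.val I (R.w ⟨t + 1, ht⟩))) ∧
  (∀ (u : Fin G.n) (c : Fin G.n × Fin G.n) (a : Fin k), G.children u = some c →
      T (R.el ((u : ℕ) + 1) (R.lt_m (by omega))) (R.gN c.1 a) = R.gA u false a ∧
      T (R.el ((u : ℕ) + 1) (R.lt_m (by omega))) (R.gN c.2 a) = R.gA u true a) ∧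
  (∀ (u : Fin G.n) (c : Fin G.n × Fin G.n) (b₁ b₂ : Fin k) (h : G.children u = some c),
      T (R.gA u false b₁) (R.gA u true b₂)
        = R.gN u (I (Sum.inr ⟨⟨u, by rw [h]; rfl⟩, (b₁, b₂)⟩))) ∧
  (∀ x y, ¬ R.Used x y → T x y = R.el 0 R.m_pos)

end RedSetup

/-!
Call an element of `[m]` *truthful* for `I` if it is one of `1, …, n+1`, a name `g(u, val u)`,
or a name `g(vu, val v)` of an arc. Every defining equation of `T^I` maps truthful arguments to
a truthful value and the unused pairs give `1`, so by injectivity of the naming nothing but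
truthful elements is generated. Conversely `1` generates `2, …, n+1`; then `T(1, ·)` walks
through the leaves in order, producing `g(w_t, l_{w_t})`; and by well-founded induction up the
dag, `u + 1` turns `g(v, val v)` into the arc names, which `T` combines into `g(u, val u)`.
-/

theorem Generated.of_closed {m : ℕ} {T : Fin m → Fin m → Fin m} {S : Set (Fin m)}
    (hone : ∀ h : 0 < m, ⟨0, h⟩ ∈ S) (hT : ∀ x ∈ S, ∀ y ∈ S, T x y ∈ S) {x : Fin m}
    (hx : Generated T x) : x ∈ S := by
  induction hx with
  | one h => exact hone h
  | app _ _ ihx ihy => exact hT _ ihx _ ihy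

namespace BinDag

theorem exists_leaf (G : BinDag) : ∃ u, G.children u = none := by
  obtain ⟨u, -, hmin⟩ := G.wf.has_min Set.univ ⟨G.root, trivial⟩
  refine ⟨u, Option.eq_none_iff_forall_ne_some.2 fun c hc => ?_⟩
  exact hmin c.1 trivial ⟨c, hc, Or.inl rfl⟩

theorem val_of_children_eq_some (G : BinDag) {k : ℕ} (I : G.Var k → Fin k) {u : Fin G.n}
    {c : Fin G.n × Fin G.n} (hc : G.children u = some c) :
    G.val I u = I (Sum.inr ⟨⟨u, by rw [hc]; rfl⟩, (G.val I c.1, G.val I c.2)⟩) := by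
  rw [val, WellFounded.fix_eq]
  split
  · next h => rw [hc] at h; cases h
  · next c' h => rw [hc] at h; cases h; rfl

end BinDag

namespace RedSetup

variable {G : BinDag} {k : ℕ} (R : RedSetup G k)

theorem gN_inj_iff {u u' : Fin G.n} {a a' : Fin k} :
    R.gN u a = R.gN u' a' ↔ u = u' ∧ a = a' := by
  refine ⟨fun h => ?_, by rintro ⟨rfl, rfl⟩; rfl⟩
  simpa using R.g_inj (a₁ := .inl (u, a)) (a₂ := .inl (u', a')) h

theorem gA_inj_iff {u u' : Fin G.n} {s s' : Bool} {a a' : Fin k} :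
    R.gA u s a = R.gA u' s' a' ↔ u = u' ∧ s = s' ∧ a = a' := by
  refine ⟨fun h => ?_, by rintro ⟨rfl, rfl, rfl⟩; rfl⟩
  simpa using R.g_inj (a₁ := .inr (u, s, a)) (a₂ := .inr (u', s', a')) h

theorem gN_ne_gA {u u' : Fin G.n} {s : Bool} {a a' : Fin k} : R.gN u a ≠ R.gA u' s a' := by
  intro h
  simpa using R.g_inj (a₁ := .inl (u, a)) (a₂ := .inr (u', s, a')) h

theorem l_pos : 0 < R.l := by
  obtain ⟨u, hu⟩ := G.exists_leaf
  exact (R.w_surj u hu).choose.pos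

variable {R} {I : G.Var k → Fin k} {T : Fin R.m → Fin R.m → Fin R.m}

theorem Defines.apply_arc (hT : R.Defines I T) {u : Fin G.n} {c : Fin G.n × Fin G.n}
    (hc : G.children u = some c) (s : Bool) (a : Fin k) :
    T (R.el ((u : ℕ) + 1) (R.lt_m (by omega))) (R.gN (if s then c.2 else c.1) a)
      = R.gA u s a := by
  cases s
  exacts [(hT.2.2.2.1 u c a hc).1, (hT.2.2.2.1 u c a hc).2]

variable (R I) in
def Truthful (x : Fin R.m) : Prop :=
  (x : ℕ) ≤ G.n ∨ (∃ u, x = R.gN u (G.val I u)) ∨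
    ∃ u c s, G.children u = some c ∧ x = R.gA u s (G.val I (if s then c.2 else c.1))

theorem truthful_gN_iff {u : Fin G.n} {a : Fin k} :
    R.Truthful I (R.gN u a) ↔ G.val I u = a := by
  refine ⟨?_, fun h => Or.inr (Or.inl ⟨u, h ▸ rfl⟩)⟩
  rintro (hle | ⟨v, hv⟩ | ⟨v, c, s, -, hv⟩)
  · have := R.g_range_N u a
    omega
  · obtain ⟨rfl, h⟩ := R.gN_inj_iff.1 hv
    exact h.symm
  · exact absurd hv R.gN_ne_gA

theorem truthful_gA_iff {u : Fin G.n} {c : Fin G.n × Fin G.n} (hc : G.children u = some c)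
    {s : Bool} {a : Fin k} :
    R.Truthful I (R.gA u s a) ↔ G.val I (if s then c.2 else c.1) = a := by
  refine ⟨?_, fun h => Or.inr (Or.inr ⟨u, c, s, hc, h ▸ rfl⟩)⟩
  rintro (hle | ⟨v, hv⟩ | ⟨v, c', s', hc', hv⟩)
  · have := R.g_range_A u s a
    omega
  · exact absurd hv.symm R.gN_ne_gA
  · obtain ⟨rfl, rfl, rfl⟩ := R.gA_inj_iff.1 hv
    obtain rfl : c = c' := Option.some.inj (hc.symm.trans hc')
    rfl

theorem truthful_apply (hT : R.Defines I T) {x y : Fin R.m}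
    (hx : R.Truthful I x) (hy : R.Truthful I y) : R.Truthful I (T x y) := by
  have ⟨hsucc, hfirst, hnext, _, hnode, hunused⟩ := hT
  by_cases hused : R.Used x y
  swap
  · rw [hunused x y hused]
    exact Or.inl (Nat.zero_le _)
  rcases hused with ⟨hx0, hyn⟩ | ⟨hx0, hyn⟩ | ⟨hx0, t, ht, a, rfl⟩ |
    ⟨u, c, a, hc, hxu, hy'⟩ | ⟨u, c, b₁, b₂, hc, rfl, rfl⟩
  · obtain rfl : x = R.el 0 R.m_pos := Fin.ext hx0
    rw [show y = R.el (⟨y, hyn⟩ : Fin G.n) (R.lt_m (by omega)) from rfl, hsucc ⟨y, hyn⟩]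
    exact Or.inl hyn
  · obtain rfl : x = R.el 0 R.m_pos := Fin.ext hx0
    obtain rfl : y = R.el G.n (R.lt_m G.n.le_succ) := Fin.ext hyn
    rw [hfirst R.l_pos]
    exact Or.inr (Or.inl ⟨_, rfl⟩)
  · obtain rfl : x = R.el 0 R.m_pos := Fin.ext hx0
    rw [hnext t ht a]
    exact Or.inr (Or.inl ⟨_, rfl⟩)
  · obtain rfl : x = R.el ((u : ℕ) + 1) (R.lt_m (Nat.succ_le_succ u.isLt.le)) := Fin.ext hxu
    obtain ⟨s, rfl⟩ : ∃ s : Bool, y = R.gN (if s then c.2 else c.1) a := by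
      rcases hy' with rfl | rfl
      exacts [⟨false, rfl⟩, ⟨true, rfl⟩]
    rw [hT.apply_arc hc s a, truthful_gA_iff hc]
    exact truthful_gN_iff.1 hy
  · obtain rfl := (truthful_gA_iff hc).1 hx
    obtain rfl := (truthful_gA_iff hc).1 hy
    rw [hnode u c _ _ hc, truthful_gN_iff, G.val_of_children_eq_some I hc]
    rfl

theorem Generated.truthful (hT : R.Defines I T) {x : Fin R.m} (hx : Generated T x) :
    R.Truthful I x :=
  Generated.of_closed (S := {x | R.Truthful I x}) (fun _ => Or.inl (Nat.zero_le _))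
    (fun _ hx _ hy => truthful_apply hT hx hy) hx

theorem generated_el (hT : R.Defines I T) {j : ℕ} (hj : j ≤ G.n) :
    Generated T (R.el j (R.lt_m (by omega))) := by
  induction j with
  | zero => exact Generated.one R.m_pos
  | succ i ih =>
    rw [← hT.1 ⟨i, by omega⟩]
    exact Generated.app (Generated.one R.m_pos) (ih (by omega))

theorem generated_gN_leaf (hT : R.Defines I T) {t : ℕ} (ht : t < R.l) :
    Generated T (R.gN (R.w ⟨t, ht⟩) (G.val I (R.w ⟨t, ht⟩))) := by
  induction t with
  | zero =>
    rw [← hT.2.1 ht]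
    exact Generated.app (Generated.one R.m_pos) (generated_el hT le_rfl)
  | succ i ih =>
    rw [← hT.2.2.1 i ht]
    exact Generated.app (Generated.one R.m_pos) (ih (by omega))

theorem generated_gA_of_generated_gN (hT : R.Defines I T) {u : Fin G.n}
    {c : Fin G.n × Fin G.n} (hc : G.children u = some c) {s : Bool} {a : Fin k}
    (h : Generated T (R.gN (if s then c.2 else c.1) a)) : Generated T (R.gA u s a) := by
  rw [← hT.apply_arc hc s a]
  exact Generated.app (generated_el hT (by omega)) h

theorem generated_gN_val (hT : R.Defines I T) (u : Fin G.n) :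
    Generated T (R.gN u (G.val I u)) := by
  induction u using WellFounded.induction G.wf with
  | _ u ih =>
    match hc : G.children u with
    | none =>
      obtain ⟨⟨t, ht⟩, rfl⟩ := R.w_surj u hc
      exact generated_gN_leaf hT ht
    | some c =>
      have hleft := generated_gA_of_generated_gN hT hc (s := false) (ih c.1 ⟨c, hc, .inl rfl⟩)
      have hright := generated_gA_of_generated_gN hT hc (s := true) (ih c.2 ⟨c, hc, .inr rfl⟩)
      rw [G.val_of_children_eq_some I hc, ← hT.2.2.2.2.1 u c _ _ hc]
      exact Generated.app hleft hright

theorem generated_iff_truthful (hT : R.Defines I T) {x : Fin R.m} :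
    Generated T x ↔ R.Truthful I x := by
  refine ⟨Generated.truthful hT, ?_⟩
  rintro (hle | ⟨u, rfl⟩ | ⟨u, c, s, hc, rfl⟩)
  · exact generated_el hT hle
  · exact generated_gN_val hT u
  · exact generated_gA_of_generated_gN hT hc (generated_gN_val hT _)

end RedSetup

/-- In the reduction, for every input `I`, node `u` and `a ∈ [k]`, the element `gN u a`
("node `u` has value `a`") is generated by `T^I` iff `val(u)[I] = a`; and for every arc from
child `vᵢ` into `u`, the element `gA u side a` is generated iff `val(vᵢ)[I] = a`. -/
theorem stmt6 (G : BinDag) (k : ℕ) (R : RedSetup G k)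
    (I : G.Var k → Fin k) (T : Fin R.m → Fin R.m → Fin R.m) (hT : R.Defines I T) :
    (∀ (u : Fin G.n) (a : Fin k), Generated T (R.gN u a) ↔ G.val I u = a) ∧
    (∀ (u : Fin G.n) (c : Fin G.n × Fin G.n) (s : Bool) (a : Fin k),
      G.children u = some c →
        (Generated T (R.gA u s a) ↔ G.val I (if s then c.2 else c.1) = a)) :=
  ⟨fun _ _ => (R.generated_iff_truthful hT).trans R.truthful_gN_iff,
    fun _ _ _ _ hc => (R.generated_iff_truthful hT).trans (R.truthful_gA_iff hc)⟩
end
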